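/- arXiv:math/0410487 — 4 statements merged into one kernel-verified Lean document; each statement's English description precedes it below -/
import Mathlib

section
/- Let G = (G^a_b) be an r×r matrix with entries in ℂ[[q^1,…,q^r]] which is invertible over ℂ[[q^1,…,q^r]] (equivalently, G(0) ∈ GL_r(ℂ)). Then the following are equivalent: (i) θ_c G^a_b = θ_b G^a_c for all a, b, c, and there is a permutation σ of {1,…,r} with G^a_b(0) = δ^{σ(a)}_b; (ii) there exist a permutation σ of {1,…,r} and δ^1, …, δ^r ∈ m such that, setting f^a := q^{σ(a)}·exp(δ^a), one has θ_b f^a = G^a_b·f^a for all a, b (i.e. G is the log-Jacobi matrix ∂log f^a/∂log q^b of the coordinate change q ↦ f). Moreover, in (ii) the permutation σ and the series δ^1,…,δ^r are uniquely determined; equivalently, the new coordinates f^a are determined up to multiplication by nonzero constants f^a ↦ c^a f^a. -/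
/-!
Work over ℂ.  `OO r = ℂ[[q¹,…,qʳ]]` is the ring of formal power series,
`m` its maximal ideal (power series with zero constant term), and
`θ_a = qᵃ·∂/∂qᵃ` the logarithmic partial derivative.
-/

noncomputable section

/-- `𝒪 = ℂ[[q¹,…,qʳ]]`, the ring of formal power series. -/
abbrev OO (r : ℕ) := MvPowerSeries (Fin r) ℂ

/-- The logarithmic derivative `θ_a = qᵃ ∂/∂qᵃ` on `ℂ[[q]]`:
on the monomial `q^d` it acts by multiplication by `d a`. -/
def thetaO {r : ℕ} (a : Fin r) (F : OO r) : OO r := fun d => (d a : ℂ) * F d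

/-- The constant term at `q = 0`; membership in `m` is `ccO F = 0`. -/
def ccO {r : ℕ} : OO r →+* ℂ := MvPowerSeries.constantCoeff

/-- total degree of a monomial exponent -/
def degOf {r : ℕ} (d : Fin r →₀ ℕ) : ℕ := d.sum fun _ k => k

/-- The formal exponential `exp(δ) = Σ_k δ^k/k!` of a power series `δ` with zero
constant term; for such `δ` the coefficient of `q^d` only receives contributions
from `k ≤ |d|`, so the truncated sum below is the full exponential. -/
def fexpO {r : ℕ} (δ : OO r) : OO r :=
  fun d => ∑ k ∈ Finset.range (degOf d + 1), (k.factorial : ℂ)⁻¹ * ((δ ^ k) d)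

/-- The condition that `(G, σ, δ)` realizes `G` as the log-Jacobi matrix
`G^a_b = ∂ log f^a / ∂ log q^b` of the coordinate change `f^a = q^{σ(a)}·exp(δ^a)`,
i.e. `θ_b f^a = G^a_b · f^a` with `δ^a ∈ m`. -/
def IsLogJacobiDatum {r : ℕ} (G : Matrix (Fin r) (Fin r) (OO r))
    (σ : Equiv.Perm (Fin r)) (δ : Fin r → OO r) : Prop :=
  (∀ a, ccO (δ a) = 0) ∧
  ∀ a b, thetaO b (MvPowerSeries.X (σ a) * fexpO (δ a)) =
    G a b * (MvPowerSeries.X (σ a) * fexpO (δ a))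

/-!
Since `θ_b` is a derivation with `θ_b qⁱ = δ_{bi} qⁱ` and `θ_b (exp δ) = θ_b δ · exp δ`, the
equations `θ_b fᵃ = Gᵃ_b fᵃ` for `fᵃ = q^{σ(a)} exp δᵃ` say exactly `Gᵃ_b = δ^{σ(a)}_b + θ_b δᵃ`.
From this, (ii) ⇒ (i) is the commutation of the `θ_b`, and (i) ⇒ (ii) is a formal Poincaré lemma:
the closed row `g_b = Gᵃ_b - δ^{σ(a)}_b` vanishing at `0` is integrated coefficientwise by
dividing by the total degree. For uniqueness, `G(0)` recovers `σ`, and a series in `m` is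
determined by its logarithmic derivatives.
-/

open MvPowerSeries Finset

namespace LogJacobi

variable {r : ℕ}

theorem coeff_thetaO (b : Fin r) (F : OO r) (d : Fin r →₀ ℕ) :
    coeff d (thetaO b F) = (d b : ℂ) * coeff d F := rfl

theorem degOf_eq_degree (d : Fin r →₀ ℕ) : degOf d = d.degree := rfl

theorem ccO_eq_coeff_zero (F : OO r) : ccO F = coeff 0 F := rfl

theorem thetaO_mul (b : Fin r) (F H : OO r) :
    thetaO b (F * H) = thetaO b F * H + F * thetaO b H := by
  ext d
  simp only [map_add, coeff_thetaO, coeff_mul, mul_sum, ← sum_add_distrib]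
  refine sum_congr rfl fun p hp => ?_
  rw [HasAntidiagonal.mem_antidiagonal] at hp
  rw [← hp, Finsupp.add_apply, Nat.cast_add]
  ring

def theta (b : Fin r) : Derivation ℂ (OO r) (OO r) :=
  Derivation.mk'
    { toFun := thetaO b
      map_add' := fun F H => by ext d; simp only [map_add, coeff_thetaO]; ring
      map_smul' := fun c F => by ext d; simp only [map_smul, coeff_thetaO, smul_eq_mul, RingHom.id_apply]; ring }
    fun F H => by simp only [LinearMap.coe_mk, AddHom.coe_mk, thetaO_mul, smul_eq_mul]; ring

@[simp]
theorem theta_apply (b : Fin r) (F : OO r) : theta b F = thetaO b F := rfl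

theorem thetaO_ite_one_zero (b : Fin r) (P : Prop) [Decidable P] :
    thetaO b (if P then (1 : OO r) else 0) = 0 := by
  split_ifs
  · exact (theta b).map_one_eq_zero
  · exact (theta b).map_zero

theorem ccO_ite_one_zero (P : Prop) [Decidable P] :
    ccO (if P then (1 : OO r) else 0) = if P then 1 else 0 := by
  split_ifs <;> simp

theorem thetaO_comm (b c : Fin r) (F : OO r) :
    thetaO c (thetaO b F) = thetaO b (thetaO c F) := by
  ext d
  simp only [coeff_thetaO]
  ring

theorem ccO_thetaO (b : Fin r) (F : OO r) : ccO (thetaO b F) = 0 := by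
  simp [ccO_eq_coeff_zero, coeff_thetaO]

theorem thetaO_X (b i : Fin r) :
    thetaO b (X i : OO r) = if b = i then X i else 0 := by
  ext d
  rw [coeff_thetaO, coeff_X]
  split_ifs <;> simp_all [coeff_X]

theorem eq_of_thetaO_eq {F F' : OO r} (h0 : ccO F = ccO F') (h : ∀ b, thetaO b F = thetaO b F') :
    F = F' := by
  ext d
  rcases eq_or_ne d 0 with rfl | hd
  · exact h0
  · obtain ⟨b, hb⟩ : ∃ b, d b ≠ 0 := by simpa [Finsupp.ext_iff] using hd
    have hcoeff := congrArg (coeff d) (h b)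
    rw [coeff_thetaO, coeff_thetaO] at hcoeff
    exact mul_left_cancel₀ (Nat.cast_ne_zero.mpr hb) hcoeff

theorem exists_thetaO_eq (g : Fin r → OO r) (hg0 : ∀ b, ccO (g b) = 0)
    (hclosed : ∀ b c, thetaO c (g b) = thetaO b (g c)) :
    ∃ δ : OO r, ccO δ = 0 ∧ ∀ b, thetaO b δ = g b := by
  -- Euler's identity `∑_c θ_c = |d|` on `q^d` makes `|d|⁻¹ ∑_c g_c` a primitive.
  let δ : OO r := fun d => (d.degree : ℂ)⁻¹ * ∑ c, coeff d (g c)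
  have hδ0 : ccO δ = 0 := by
    change ((0 : Fin r →₀ ℕ).degree : ℂ)⁻¹ * _ = 0
    simp
  refine ⟨δ, hδ0, fun b => ?_⟩
  ext d
  rcases eq_or_ne d 0 with rfl | hd
  · simpa [coeff_thetaO, ccO_eq_coeff_zero] using (hg0 b).symm
  have hdeg : (d.degree : ℂ) ≠ 0 := by
    exact_mod_cast (Finsupp.degree_eq_zero_iff d).not.mpr hd
  have euler : (d.degree : ℂ) * coeff d (g b) = (d b : ℂ) * ∑ c, coeff d (g c) := by
    rw [Finsupp.degree_eq_sum, Nat.cast_sum, sum_mul, mul_sum]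
    exact sum_congr rfl fun c _ => by
      simpa only [coeff_thetaO] using congrArg (coeff d) (hclosed b c)
  rw [coeff_thetaO]
  change (d b : ℂ) * ((d.degree : ℂ)⁻¹ * ∑ c, coeff d (g c)) = coeff d (g b)
  field_simp
  rw [euler]

open Nat in
def expTrunc (δ : OO r) (N : ℕ) : OO r :=
  ∑ k ∈ range (N + 1), (k ! : ℂ)⁻¹ • δ ^ k

theorem coeff_pow_eq_zero_of_degree_lt {δ : OO r} (hδ : ccO δ = 0) {k : ℕ}
    {d : Fin r →₀ ℕ} (hd : d.degree < k) : coeff d (δ ^ k) = 0 :=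
  coeff_of_lt_order ((Nat.cast_lt.mpr hd).trans_le (le_order_pow_of_constantCoeff_eq_zero k hδ))

theorem coeff_fexpO_eq_coeff_expTrunc {δ : OO r} (hδ : ccO δ = 0) {d : Fin r →₀ ℕ} {N : ℕ}
    (hd : d.degree ≤ N) : coeff d (fexpO δ) = coeff d (expTrunc δ N) := by
  simp only [expTrunc, map_sum, map_smul, smul_eq_mul]
  refine sum_subset (range_subset_range.mpr (Nat.succ_le_succ hd)) fun k _ hk => ?_
  rw [mem_range, not_lt] at hk
  change _ * coeff d (δ ^ k) = 0
  rw [coeff_pow_eq_zero_of_degree_lt hδ (Nat.lt_of_succ_le hk), mul_zero]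

theorem thetaO_expTrunc_succ (b : Fin r) (δ : OO r) (N : ℕ) :
    thetaO b (expTrunc δ (N + 1)) = thetaO b δ * expTrunc δ N := by
  rw [← theta_apply b, expTrunc, expTrunc, map_sum (theta b), sum_range_succ', mul_sum]
  simp only [Derivation.map_smul, Derivation.leibniz_pow, pow_zero, Derivation.map_one_eq_zero,
    smul_zero, add_zero]
  refine sum_congr rfl fun k _ => ?_
  have hfac : ((k + 1).factorial : ℂ)⁻¹ * ((k + 1 : ℕ) : ℂ) = (k.factorial : ℂ)⁻¹ := by
    rw [Nat.factorial_succ]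
    push_cast
    field_simp
  rw [Nat.add_sub_cancel, theta_apply, ← Nat.cast_smul_eq_nsmul ℂ, smul_smul, hfac,
    mul_smul_comm, smul_eq_mul, mul_comm]

theorem coeff_mul_eq_of_coeff_eq {d : Fin r →₀ ℕ} (F : OO r) {H H' : OO r}
    (h : ∀ m ≤ d, coeff m H = coeff m H') : coeff d (F * H) = coeff d (F * H') := by
  simp only [coeff_mul]
  refine sum_congr rfl fun p hp => ?_
  rw [HasAntidiagonal.mem_antidiagonal] at hp
  rw [h p.2 (hp ▸ le_add_self)]

theorem thetaO_fexpO {δ : OO r} (hδ : ccO δ = 0) (b : Fin r) :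
    thetaO b (fexpO δ) = thetaO b δ * fexpO δ := by
  ext d
  have hlow : ∀ m ≤ d, coeff m (expTrunc δ d.degree) = coeff m (fexpO δ) := fun m hm =>
    (coeff_fexpO_eq_coeff_expTrunc hδ (Finsupp.degree_mono hm)).symm
  calc coeff d (thetaO b (fexpO δ))
      = coeff d (thetaO b (expTrunc δ (d.degree + 1))) := by
        rw [coeff_thetaO, coeff_thetaO, coeff_fexpO_eq_coeff_expTrunc hδ (Nat.le_succ _)]
    _ = coeff d (thetaO b δ * fexpO δ) := by
        rw [thetaO_expTrunc_succ, coeff_mul_eq_of_coeff_eq _ hlow]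

theorem ccO_fexpO (δ : OO r) : ccO (fexpO δ) = 1 := by
  change ∑ k ∈ range (degOf (0 : Fin r →₀ ℕ) + 1), _ = _
  simp only [degOf_eq_degree, map_zero, zero_add, range_one, Nat.factorial_zero, Nat.cast_one,
    inv_one, one_mul, sum_singleton, pow_zero]
  exact map_one (constantCoeff : OO r →+* ℂ)

theorem X_mul_fexpO_ne_zero (δ : OO r) (i : Fin r) : (X i : OO r) * fexpO δ ≠ 0 := by
  intro h
  have h1 := congrArg (coeff (Finsupp.single i 1 + 0)) h
  rw [X, coeff_add_monomial_mul, ← ccO_eq_coeff_zero, ccO_fexpO] at h1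
  simp at h1

theorem thetaO_X_mul_fexpO {δ : OO r} (hδ : ccO δ = 0) (b i : Fin r) :
    thetaO b (X i * fexpO δ) =
      ((if b = i then 1 else 0) + thetaO b δ) * (X i * fexpO δ) := by
  rw [thetaO_mul, thetaO_X, thetaO_fexpO hδ]
  split_ifs <;> ring

end LogJacobi

namespace IsLogJacobiDatum

open MvPowerSeries LogJacobi

variable {r : ℕ} {G : Matrix (Fin r) (Fin r) (OO r)} {σ σ' : Equiv.Perm (Fin r)}
  {δ δ' : Fin r → OO r}

theorem iff_eq_add_thetaO : IsLogJacobiDatum G σ δ ↔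
    (∀ a, ccO (δ a) = 0) ∧ ∀ a b, G a b = (if b = σ a then 1 else 0) + thetaO b (δ a) := by
  refine and_congr_right fun hδ => forall₂_congr fun a b => ?_
  rw [thetaO_X_mul_fexpO (hδ a), mul_left_inj' (X_mul_fexpO_ne_zero _ _), eq_comm]

theorem eq_add_thetaO (h : IsLogJacobiDatum G σ δ) (a b : Fin r) :
    G a b = (if b = σ a then 1 else 0) + thetaO b (δ a) :=
  (iff_eq_add_thetaO.mp h).2 a b

theorem ccO_apply (h : IsLogJacobiDatum G σ δ) (a b : Fin r) :
    ccO (G a b) = if b = σ a then 1 else 0 := by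
  rw [h.eq_add_thetaO, map_add, ccO_thetaO, add_zero, ccO_ite_one_zero]

theorem thetaO_comm (h : IsLogJacobiDatum G σ δ) (a b c : Fin r) :
    thetaO c (G a b) = thetaO b (G a c) := by
  rw [h.eq_add_thetaO, h.eq_add_thetaO, ← theta_apply c, map_add, ← theta_apply b (_ + _),
    map_add]
  simp only [theta_apply, thetaO_ite_one_zero, zero_add, LogJacobi.thetaO_comm]

theorem unique (h : IsLogJacobiDatum G σ δ) (h' : IsLogJacobiDatum G σ' δ') : σ = σ' ∧ δ = δ' := by
  have hσ : σ = σ' := Equiv.ext fun a => by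
    simpa [eq_comm] using (h.ccO_apply a (σ a)).symm.trans (h'.ccO_apply a (σ a))
  subst hσ
  refine ⟨rfl, funext fun a => eq_of_thetaO_eq ((h.1 a).trans (h'.1 a).symm) fun b => ?_⟩
  exact add_left_cancel ((h.eq_add_thetaO a b).symm.trans (h'.eq_add_thetaO a b))

theorem exists_of_thetaO_comm (hclosed : ∀ a b c, thetaO c (G a b) = thetaO b (G a c))
    (hcc : ∀ a b, ccO (G a b) = if b = σ a then 1 else 0) : ∃ δ, IsLogJacobiDatum G σ δ := by
  have hprimitive : ∀ a, ∃ δa : OO r,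
      ccO δa = 0 ∧ ∀ b, thetaO b δa = G a b - if b = σ a then 1 else 0 := fun a =>
    exists_thetaO_eq _ (fun b => by rw [map_sub, hcc, ccO_ite_one_zero, sub_self])
      fun b c => by
        rw [← theta_apply, ← theta_apply b, map_sub, map_sub]
        simp only [theta_apply, thetaO_ite_one_zero, hclosed a b c]
  choose δ hδ0 hδ using hprimitive
  exact ⟨δ, iff_eq_add_thetaO.mpr ⟨hδ0, fun a b => by rw [hδ, add_sub_cancel]⟩⟩

end IsLogJacobiDatum

theorem logJacobi_characterization_general {r : ℕ}
    (G : Matrix (Fin r) (Fin r) (OO r)) :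
    (((∀ a b c, thetaO c (G a b) = thetaO b (G a c)) ∧
        ∃ σ : Equiv.Perm (Fin r), ∀ a b, ccO (G a b) = if b = σ a then 1 else 0) ↔
      ∃ σ : Equiv.Perm (Fin r), ∃ δ : Fin r → OO r, IsLogJacobiDatum G σ δ) ∧
    (∀ (σ σ' : Equiv.Perm (Fin r)) (δ δ' : Fin r → OO r),
      IsLogJacobiDatum G σ δ → IsLogJacobiDatum G σ' δ' → σ = σ' ∧ δ = δ') := by
  refine ⟨⟨fun ⟨hclosed, σ, hcc⟩ => ⟨σ, IsLogJacobiDatum.exists_of_thetaO_comm hclosed hcc⟩, ?_⟩,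
    fun _ _ _ _ h h' => h.unique h'⟩
  rintro ⟨σ, δ, h⟩
  exact ⟨h.thetaO_comm, σ, h.ccO_apply⟩

/-- **Characterization of log-Jacobi matrices** (Lemma 3.4).  An invertible matrix
`G` over `ℂ[[q]]` is the log-Jacobi matrix of a formal coordinate change
`q ↦ (q^{σ(a)} exp δ^a)_a` if and only if `θ_c G^a_b = θ_b G^a_c` for all
`a, b, c` and `G^a_b(0) = δ^{σ(a)}_b` for some permutation `σ`; moreover the
permutation `σ` and the series `δ^1, …, δ^r ∈ m` are uniquely determined. -/
theorem logJacobi_characterization {r : ℕ} (hr : 1 ≤ r)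
    (G : Matrix (Fin r) (Fin r) (OO r)) (hG : IsUnit G) :
    (((∀ a b c, thetaO c (G a b) = thetaO b (G a c)) ∧
        ∃ σ : Equiv.Perm (Fin r), ∀ a b, ccO (G a b) = if b = σ a then 1 else 0) ↔
      ∃ σ : Equiv.Perm (Fin r), ∃ δ : Fin r → OO r, IsLogJacobiDatum G σ δ) ∧
    (∀ (σ σ' : Equiv.Perm (Fin r)) (δ δ' : Fin r → OO r),
      IsLogJacobiDatum G σ δ → IsLogJacobiDatum G σ' δ' → σ = σ' ∧ δ = δ') :=
  logJacobi_characterization_general G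
end
end

section
/- In the setting of the existence theorem for S — Ω_1,…,Ω_r ∈ Mat_n(ℂ[ħ][[q]]) flat with p_a := Ω_a|_{q=0} ∈ Mat_n(ℂ) independent of ħ, and S ∈ Mat_n(ℂ[ħ,ħ^{-1}]][[q]]) the unique matrix with S|_{q=0} = Id and ħθ_a S + Ω_a S − S p_a = 0 for all a — assume in addition that every Ω_a is independent of ħ, i.e. has entries in ℂ[[q^1,…,q^r]]. Then S lies in Mat_n(ℂ[[ħ^{-1}]][[q]]); that is, S contains no positive powers of ħ and is regular at ħ = ∞. -/
/-!
Work over ℂ.  We represent the coefficient ring `ℂ[ħ,ħ⁻¹]]` (formal Laurent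
series `Σ_{k ≤ K} c_k ħ^k` with finitely many positive powers of `ħ`) as
`LaurentSeries ℂ` in the variable `t = ħ⁻¹`; thus the coefficient of `t^k`
is the coefficient of `ħ^{-k}`.  `AA r = ℂ[ħ,ħ⁻¹]][[q¹,…,qʳ]]`, and
`θ_a = qᵃ·∂/∂qᵃ` is the logarithmic partial derivative.
-/

noncomputable section

/-- `ℂ[ħ,ħ⁻¹]]`, realized as Laurent series in `t = ħ⁻¹`. -/
abbrev LS := LaurentSeries ℂ

/-- `ħ = t⁻¹` where `t` is the `LaurentSeries` variable. -/
def hbarL : LS := HahnSeries.single (-1 : ℤ) (1 : ℂ)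

/-- `ℂ[ħ,ħ⁻¹]][[q¹,…,qʳ]]`. -/
abbrev AA (r : ℕ) := MvPowerSeries (Fin r) LS

/-- The logarithmic derivative `θ_a = qᵃ ∂/∂qᵃ`:
on the monomial `q^d` it acts by multiplication by `d a`. -/
def thetaA {r : ℕ} (a : Fin r) (x : AA r) : AA r := fun d => (d a : LS) * x d

/-- `θ_a` acting entrywise on matrices. -/
def thetaMat {r n : ℕ} (a : Fin r) (M : Matrix (Fin n) (Fin n) (AA r)) :
    Matrix (Fin n) (Fin n) (AA r) :=
  Matrix.of fun i j => thetaA a (M i j)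

/-- `ħ` as an element of `ℂ[ħ,ħ⁻¹]][[q]]`. -/
def hbarA (r : ℕ) : AA r := MvPowerSeries.C (σ := Fin r) (R := LS) hbarL

/-- The constant term at `q = 0`. -/
def ccA {r : ℕ} : AA r →+* LS := MvPowerSeries.constantCoeff (σ := Fin r) (R := LS)

/-- The embedding `ℂ → ℂ[ħ,ħ⁻¹]][[q]]`. -/
def cA (r : ℕ) : ℂ →+* AA r := (MvPowerSeries.C (σ := Fin r) (R := LS)).comp HahnSeries.C

/-- `x ∈ ℂ[ħ]`: `x` is a polynomial in `ħ` (no negative powers of `ħ`,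
i.e. no positive powers of `t`; finiteness is automatic for Laurent series). -/
def isPolyH (x : LS) : Prop := ∀ k : ℤ, 0 < k → x.coeff k = 0

/-- `x ∈ ℂ[[ħ⁻¹]]`: `x` is regular at `ħ = ∞` (no positive powers of `ħ`). -/
def isRegH (x : LS) : Prop := ∀ k : ℤ, k < 0 → x.coeff k = 0

/-- `x ∈ ℂ`: `x` is a constant, independent of `ħ`. -/
def isConstH (x : LS) : Prop := ∀ k : ℤ, k ≠ 0 → x.coeff k = 0

/-- A matrix over `ℂ[ħ,ħ⁻¹]][[q]]` has entries in `ℂ[ħ][[q]]`. -/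
def MatPolyH {r n : ℕ} (M : Matrix (Fin n) (Fin n) (AA r)) : Prop :=
  ∀ i j d, isPolyH (M i j d)

/-- A matrix over `ℂ[ħ,ħ⁻¹]][[q]]` has entries in `ℂ[[ħ⁻¹]][[q]]`. -/
def MatRegH {r n : ℕ} (M : Matrix (Fin n) (Fin n) (AA r)) : Prop :=
  ∀ i j d, isRegH (M i j d)

/-- A matrix over `ℂ[ħ,ħ⁻¹]][[q]]` has entries in `ℂ[[q]]`,
i.e. is independent of `ħ`. -/
def MatConstH {r n : ℕ} (M : Matrix (Fin n) (Fin n) (AA r)) : Prop :=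
  ∀ i j d, isConstH (M i j d)

/-- Flatness: `ħ(θ_aΩ_b − θ_bΩ_a) + Ω_aΩ_b − Ω_bΩ_a = 0` for all `a, b`. -/
def IsFlat {r n : ℕ} (Ω : Fin r → Matrix (Fin n) (Fin n) (AA r)) : Prop :=
  ∀ a b, hbarA r • (thetaMat a (Ω b) - thetaMat b (Ω a)) + (Ω a * Ω b - Ω b * Ω a) = 0


/-!
Write `S = Σ_d S_d q^d` and let `S_{d,k}` be the coefficient of `t^k = ħ^{-k}` in `S_d`.
Since `Ω_a` and `p_a` do not involve `ħ`, the coefficient of `q^d t^k` in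
`ħ θ_a S + Ω_a S - S p_a = 0` reads
`d_a S_{d,k+1} = S_{d,k} p_a - Σ_{e+f=d} Ω_{a,e} S_{f,k}`.
Choosing `a` with `d_a ≠ 0`, the `t^{k+1}`-coefficients of all `S_f`, `f ≤ d`, therefore vanish
as soon as their `t^k`-coefficients do (for `f = 0` this is `S_0 = 1`, as long as `k + 1 < 0`).
Laurent series have no coefficients far to the left, so an upward induction on `k`, starting
below the finitely many orders involved, kills every `S_{d,k}` with `k < 0`.
-/

open Filter Finset.HasAntidiagonal

lemma hbarL_mul_coeff (x : LS) (k : ℤ) : (hbarL * x).coeff k = x.coeff (k + 1) := by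
  have h := HahnSeries.coeff_single_mul_add (r := (1 : ℂ)) (x := x) (a := k + 1) (b := -1)
  rwa [add_neg_cancel_right, one_mul] at h

lemma isConstH.coeff_mul {x : LS} (hx : isConstH x) (y : LS) (k : ℤ) :
    (x * y).coeff k = x.coeff 0 * y.coeff k := by
  have hx_single : x = HahnSeries.single 0 (x.coeff 0) := by
    ext k'
    rcases eq_or_ne k' 0 with rfl | hk'
    · rw [HahnSeries.coeff_single_same]
    · rw [HahnSeries.coeff_single_of_ne hk', hx k' hk']
  rw [hx_single, HahnSeries.coeff_single_zero_mul, HahnSeries.coeff_single_same]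

lemma LaurentSeries.eventually_coeff_eq_zero_atBot {R : Type*} [Zero R]
    (x : LaurentSeries R) : ∀ᶠ k in atBot, x.coeff k = 0 :=
  (eventually_lt_atBot x.order).mono fun _ hk => HahnSeries.coeff_eq_zero_of_lt_order hk

lemma Int.forall_lt_of_forall_le_of_succ {P : ℤ → Prop} {N b : ℤ} (hN : ∀ k ≤ N, P k)
    (hsucc : ∀ k, k + 1 < b → P k → P (k + 1)) : ∀ k < b, P k := by
  have hge : ∀ k, N ≤ k → k < b → P k := by
    intro k hNk
    induction k, hNk using Int.leInduction with
    | base => exact fun _ => hN N le_rfl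
    | succ m _ ih => exact fun hmb => hsucc m hmb (ih (by omega))
  intro k hkb
  rcases le_total k N with hkN | hNk
  · exact hN k hkN
  · exact hge k hNk hkb

section FlatSection

variable {r n : ℕ} {Ω : Fin r → Matrix (Fin n) (Fin n) (AA r)}
  {p : Fin r → Matrix (Fin n) (Fin n) ℂ} {S : Matrix (Fin n) (Fin n) (AA r)}

lemma flatSection_coeff_recursion (hconst : ∀ a, MatConstH (Ω a))
    (hSeq : ∀ a, hbarA r • thetaMat a S + Ω a * S - S * (p a).map (cA r) = 0)
    (a : Fin r) (i j : Fin n) (d : Fin r →₀ ℕ) (k : ℤ) :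
    (d a : ℂ) * (S i j d).coeff (k + 1)
      + ∑ l, ∑ x ∈ antidiagonal d, (Ω a i l x.1).coeff 0 * (S l j x.2).coeff k
      - ∑ l, (S i l d).coeff k * p a l j = 0 := by
  have hentry : hbarA r * thetaA a (S i j) + ∑ l, Ω a i l * S l j
      - ∑ l, S i l * cA r (p a l j) = 0 := by
    simpa [Matrix.mul_apply, thetaMat] using congr_fun₂ (hSeq a) i j
  have hcoeff := congr_arg (MvPowerSeries.coeff d) hentry
  simp only [map_add, map_sub, map_sum, map_zero, hbarA, cA, RingHom.comp_apply,
    MvPowerSeries.coeff_C_mul, MvPowerSeries.coeff_mul_C] at hcoeff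
  simp only [MvPowerSeries.coeff_mul] at hcoeff
  simp only [thetaA, MvPowerSeries.coeff_apply] at hcoeff
  have hcoeffk := congr_arg (HahnSeries.coeff · k) hcoeff
  simpa only [HahnSeries.coeff_add, HahnSeries.coeff_sub, HahnSeries.coeff_sum,
    HahnSeries.coeff_zero, hbarL_mul_coeff, (hconst _ _ _ _).coeff_mul, HahnSeries.C_apply,
    HahnSeries.coeff_mul_single_zero, ← map_natCast HahnSeries.C,
    HahnSeries.coeff_single_zero_mul]
    using hcoeffk

lemma flatSection_coeff_zero_eq_zero (hScc : S.map ccA = 1) (i j : Fin n) {k : ℤ} (hk : k ≠ 0) :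
    (S i j 0).coeff k = 0 := by
  have h : S i j 0 = (1 : Matrix (Fin n) (Fin n) LS) i j := congr_fun₂ hScc i j
  rcases eq_or_ne i j with rfl | hij
  · rw [h, Matrix.one_apply_eq, HahnSeries.coeff_one, if_neg hk]
  · rw [h, Matrix.one_apply_ne hij, HahnSeries.coeff_zero]

lemma flatSection_coeff_succ_eq_zero (hconst : ∀ a, MatConstH (Ω a))
    (hSeq : ∀ a, hbarA r • thetaMat a S + Ω a * S - S * (p a).map (cA r) = 0)
    {d : Fin r →₀ ℕ} (hd : d ≠ 0) {k : ℤ}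
    (hk : ∀ e ≤ d, ∀ i j, (S i j e).coeff k = 0)
    (i j : Fin n) : (S i j d).coeff (k + 1) = 0 := by
  obtain ⟨a, ha⟩ := Finsupp.ne_iff.mp hd
  have hrec := flatSection_coeff_recursion hconst hSeq a i j d k
  have hΩS : ∑ l, ∑ x ∈ antidiagonal d, (Ω a i l x.1).coeff 0 * (S l j x.2).coeff k = 0 :=
    Finset.sum_eq_zero fun l _ => Finset.sum_eq_zero fun x hx => by
      rw [hk x.2 (le_of_add_le_right (mem_antidiagonal.mp hx).le) l j, mul_zero]
  have hSp : ∑ l, (S i l d).coeff k * p a l j = 0 :=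
    Finset.sum_eq_zero fun l _ => by rw [hk d le_rfl i l, zero_mul]
  rw [hΩS, hSp, add_zero, sub_zero] at hrec
  exact (mul_eq_zero.mp hrec).resolve_left (Nat.cast_ne_zero.mpr ha)

end FlatSection

theorem flat_section_regular_at_infinity_general {r n : ℕ}
    (Ω : Fin r → Matrix (Fin n) (Fin n) (AA r))
    (p : Fin r → Matrix (Fin n) (Fin n) ℂ)
    (hconst : ∀ a, MatConstH (Ω a))
    (S : Matrix (Fin n) (Fin n) (AA r))
    (hScc : S.map ccA = 1)
    (hSeq : ∀ a, hbarA r • thetaMat a S + Ω a * S - S * (p a).map (cA r) = 0) :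
    MatRegH S := by
  intro i j d
  obtain ⟨N, hN⟩ : ∃ N, ∀ k ≤ N, ∀ e ≤ d, ∀ i j, (S i j e).coeff k = 0 :=
    eventually_atBot.mp <| (Set.finite_Iic d).eventually_all.mpr fun e _ =>
      eventually_all.mpr fun i => eventually_all.mpr fun j =>
        LaurentSeries.eventually_coeff_eq_zero_atBot _
  have hsucc (k : ℤ) (hk : k + 1 < 0) (hPk : ∀ e ≤ d, ∀ i j, (S i j e).coeff k = 0) :
      ∀ e ≤ d, ∀ i j, (S i j e).coeff (k + 1) = 0 := by
    intro e he i j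
    rcases eq_or_ne e 0 with rfl | he0
    · exact flatSection_coeff_zero_eq_zero hScc i j hk.ne
    · exact flatSection_coeff_succ_eq_zero hconst hSeq he0 (fun f hf => hPk f (hf.trans he)) i j
  exact fun k hk => Int.forall_lt_of_forall_le_of_succ hN hsucc k hk d le_rfl i j

/-- **Regularity of `S` at `ħ = ∞`** (Remark 3.7).  If, in the setting of the
existence theorem for `S` (flat `Ω_a ∈ Mat_n(ℂ[ħ][[q]])` with `p_a = Ω_a|_{q=0}`
independent of `ħ`), every `Ω_a` is moreover independent of `ħ`, then the
unique flat section `S` lies in `Mat_n(ℂ[[ħ⁻¹]][[q]])`: it contains no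
positive powers of `ħ`. -/
theorem flat_section_regular_at_infinity {r n : ℕ} (hr : 1 ≤ r) (hn : 1 ≤ n)
    (Ω : Fin r → Matrix (Fin n) (Fin n) (AA r))
    (hpoly : ∀ a, MatPolyH (Ω a))
    (hflat : IsFlat Ω)
    (p : Fin r → Matrix (Fin n) (Fin n) ℂ)
    (hp : ∀ a i j, ccA (Ω a i j) = HahnSeries.C (p a i j))
    (hconst : ∀ a, MatConstH (Ω a))
    (S : Matrix (Fin n) (Fin n) (AA r))
    (hScc : S.map ccA = 1)
    (hSeq : ∀ a, hbarA r • thetaMat a S + Ω a * S - S * (p a).map (cA r) = 0) :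
    MatRegH S :=
  flat_section_regular_at_infinity_general Ω p hconst S hScc hSeq
end
end

section
/- Let S ∈ Mat_n(ℂ[ħ,ħ^{-1}]][[q]]) with S|_{q=0} = Id and let S = S_+·S_− be its Birkhoff factorization, with S_+ ∈ Mat_n(ℂ[ħ][[q]]) and S_− ∈ Mat_n(ℂ[[ħ^{-1}]][[q]]), S_− ≡ Id modulo ħ^{-1}. Let μ ∈ Mat_n(ℂ), let w_1,…,w_r be integers, and set E := 2ħ·∂/∂ħ + Σ_b w_b·θ_b, acting entrywise. If E(S) + μS − Sμ = 0, then also E(S_+) + μS_+ − S_+μ = 0 and E(S_−) + μS_− − S_−μ = 0; i.e. both Birkhoff factors are degree-preserving. -/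
/-!
Work over ℂ.  We represent the coefficient ring `ℂ[ħ,ħ⁻¹]]` (formal Laurent
series `Σ_{k ≤ K} c_k ħ^k` with finitely many positive powers of `ħ`) as
`LaurentSeries ℂ` in the variable `t = ħ⁻¹`; thus the coefficient of `t^k`
is the coefficient of `ħ^{-k}`.  `AA r = ℂ[ħ,ħ⁻¹]][[q¹,…,qʳ]]`, and
`θ_a = qᵃ·∂/∂qᵃ` is the logarithmic partial derivative.
-/

noncomputable section

/-- Diagonal rescaling of a Laurent series: the coefficient of `ħ^{-k}`
is multiplied by `f k`. -/
def scaleL (f : ℤ → ℂ) (x : LS) : LS :=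
  ⟨fun k => f k * x.coeff k,
   x.isPWO_support'.mono (fun k hk => by
     simp only [Function.mem_support, ne_eq] at hk ⊢
     exact fun h => hk (by rw [h, mul_zero]))⟩

/-- Euler operator `E = 2ħ·∂/∂ħ + Σ_b w_b·θ_b`: on the monomial `ħ^j q^d`
(`= t^{-j} q^d`) it acts by multiplication by `2j + Σ_b w_b·d_b`. -/
def eulerA {r : ℕ} (w : Fin r → ℤ) (x : AA r) : AA r :=
  fun d => scaleL (fun k => (((∑ b, w b * (d b : ℤ)) - 2 * k : ℤ) : ℂ)) (x d)

/-- The Euler operator acting entrywise on matrices. -/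
def eulerMat {r n : ℕ} (w : Fin r → ℤ) (M : Matrix (Fin n) (Fin n) (AA r)) :
    Matrix (Fin n) (Fin n) (AA r) :=
  Matrix.of fun i j => eulerA w (M i j)

/-- `(S₊, S₋)` is a Birkhoff factorization of `S`. -/
def IsBirkhoffFactorization {r n : ℕ} (S Sp Sm : Matrix (Fin n) (Fin n) (AA r)) : Prop :=
  MatPolyH Sp ∧ MatRegH Sm ∧
  (∀ i j d, (Sm i j d).coeff 0 =
    MvPowerSeries.coeff (R := ℂ) d ((1 : Matrix (Fin n) (Fin n) (MvPowerSeries (Fin r) ℂ)) i j)) ∧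
  S = Sp * Sm

/-!
Write `𝒟 M = E(M) + [μ, M]`. It is a derivation, so `𝒟 S = 0` yields
`X := S₊⁻¹ 𝒟(S₊) = -𝒟(S₋) S₋⁻¹`. Uniqueness of the Birkhoff factorization of the identity
gives `S₊ = S₋ = 1` at `q = 0`, so comparing `q`-coefficients in `S₊ X = 𝒟 S₊` and
`X S₋ = -𝒟 S₋` by induction shows that every coefficient of `X` lies both in `ℂ[ħ]` and,
since `S₋ ≡ 1` modulo `ħ⁻¹` forces `𝒟 S₋ ≡ 0`, in `ħ⁻¹ℂ[[ħ⁻¹]]`. Hence `X = 0`.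
-/

open scoped Pointwise Matrix

namespace HahnSeries

variable {Γ R : Type*}

def supportedIn [PartialOrder Γ] [AddGroup R] (s : Set Γ) : AddSubgroup (HahnSeries Γ R) where
  carrier := {x | x.support ⊆ s}
  zero_mem' := by simp
  add_mem' hx hy := (support_add_subset _ _).trans (Set.union_subset hx hy)
  neg_mem' hx := support_neg.subset.trans hx

theorem mem_supportedIn [PartialOrder Γ] [AddGroup R] {s : Set Γ} {x : HahnSeries Γ R} :
    x ∈ supportedIn s ↔ x.support ⊆ s :=
  Iff.rfl

theorem mul_mem_supportedIn [AddCommMonoid Γ] [PartialOrder Γ] [IsOrderedCancelAddMonoid Γ]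
    [Ring R] {s t u : Set Γ} (hstu : s + t ⊆ u) {x y : HahnSeries Γ R}
    (hx : x ∈ supportedIn s) (hy : y ∈ supportedIn t) : x * y ∈ supportedIn u :=
  support_mul_subset.trans ((Set.add_subset_add hx hy).trans hstu)

theorem eq_zero_of_mem_supportedIn_of_disjoint [PartialOrder Γ] [AddGroup R] {s t : Set Γ}
    (hst : Disjoint s t) {x : HahnSeries Γ R} (hs : x ∈ supportedIn s)
    (ht : x ∈ supportedIn t) : x = 0 :=
  support_eq_empty_iff.mp <| Set.subset_empty_iff.mp <|
    Set.disjoint_iff_inter_eq_empty.mp hst ▸ Set.subset_inter hs ht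

theorem one_mem_supportedIn [Zero Γ] [PartialOrder Γ] [Ring R] {s : Set Γ} (hs : 0 ∈ s) :
    (1 : HahnSeries Γ R) ∈ supportedIn s :=
  support_single_subset.trans (Set.singleton_subset_iff.mpr hs)

end HahnSeries

open HahnSeries (supportedIn mem_supportedIn mul_mem_supportedIn one_mem_supportedIn)

theorem isPolyH_iff_mem_supportedIn {x : LS} : isPolyH x ↔ x ∈ supportedIn (Set.Iic 0) := by
  simp only [isPolyH, mem_supportedIn, Set.subset_def, HahnSeries.mem_support, Set.mem_Iic,
    ← not_lt]
  exact forall_congr' fun k => by tauto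

theorem isRegH_iff_mem_supportedIn {x : LS} : isRegH x ↔ x ∈ supportedIn (Set.Ici 0) := by
  simp only [isRegH, mem_supportedIn, Set.subset_def, HahnSeries.mem_support, Set.mem_Ici,
    ← not_lt]
  exact forall_congr' fun k => by tauto

theorem sub_C_coeff_zero_mem_supportedIn_Ioi {x : LS} (hx : x ∈ supportedIn (Set.Ici 0)) :
    x - HahnSeries.C (x.coeff 0) ∈ supportedIn (Set.Ioi 0) := by
  intro k hk
  by_contra hk_pos
  rcases (not_lt.mp (Set.mem_Ioi.not.mp hk_pos)).lt_or_eq with hneg | rfl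
  · have hxk : x.coeff k = 0 := by
      by_contra h
      exact absurd (hx ((HahnSeries.mem_support x k).mpr h)) (not_le.mpr hneg)
    apply hk
    rw [HahnSeries.coeff_sub, HahnSeries.C_apply, HahnSeries.coeff_single_of_ne hneg.ne, hxk,
      sub_zero]
  · exact hk (by simp [HahnSeries.C_apply])

theorem Matrix.one_apply_mem_supportedIn {n : Type*} [DecidableEq n] {s : Set ℤ}
    (hs : (0 : ℤ) ∈ s) (i j : n) : (1 : Matrix n n LS) i j ∈ supportedIn s := by
  rw [Matrix.one_apply]
  split_ifs
  exacts [one_mem_supportedIn hs, zero_mem _]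

section CoeffsIn

variable {n σ A : Type*}

def CoeffsIn [Semiring A] (U : Set A) (M : Matrix n n (MvPowerSeries σ A)) : Prop :=
  ∀ i j d, MvPowerSeries.coeff d (M i j) ∈ U

theorem CoeffsIn.mul [Fintype n] [Ring A] {U V : Set A} {W : AddSubgroup A}
    (hUVW : ∀ x ∈ U, ∀ y ∈ V, x * y ∈ W) {P Q : Matrix n n (MvPowerSeries σ A)}
    (hP : CoeffsIn U P) (hQ : CoeffsIn V Q) : CoeffsIn W (P * Q) := by
  classical
  intro i j d
  rw [Matrix.mul_apply, map_sum]
  refine W.sum_mem fun l _ => ?_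
  rw [MvPowerSeries.coeff_mul]
  exact W.sum_mem fun p _ => hUVW _ (hP i l p.1) _ (hQ l j p.2)

theorem CoeffsIn.add [Ring A] {U : AddSubgroup A} {P Q : Matrix n n (MvPowerSeries σ A)}
    (hP : CoeffsIn U P) (hQ : CoeffsIn U Q) : CoeffsIn U (P + Q) := fun i j d => by
  rw [Matrix.add_apply, map_add]
  exact U.add_mem (hP i j d) (hQ i j d)

theorem CoeffsIn.sub [Ring A] {U : AddSubgroup A} {P Q : Matrix n n (MvPowerSeries σ A)}
    (hP : CoeffsIn U P) (hQ : CoeffsIn U Q) : CoeffsIn U (P - Q) := fun i j d => by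
  rw [Matrix.sub_apply, map_sub]
  exact U.sub_mem (hP i j d) (hQ i j d)

theorem CoeffsIn.neg [Ring A] {U : AddSubgroup A} {P : Matrix n n (MvPowerSeries σ A)}
    (hP : CoeffsIn U P) : CoeffsIn U (-P) := fun i j d => by
  rw [Matrix.neg_apply, map_neg]
  exact U.neg_mem (hP i j d)

theorem coeffsIn_transpose_iff [Semiring A] {U : Set A} {M : Matrix n n (MvPowerSeries σ A)} :
    CoeffsIn U Mᵀ ↔ CoeffsIn U M :=
  ⟨fun h i j d => h j i d, fun h i j d => h j i d⟩

theorem CoeffsIn.map_constantCoeff_sub_one_apply [Fintype n] [DecidableEq n] [Ring A]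
    {U : Set A} {M : Matrix n n (MvPowerSeries σ A)} (h : CoeffsIn U (M - 1)) (i j : n) :
    (M.map MvPowerSeries.constantCoeff - 1) i j ∈ U := by
  have := h i j 0
  rwa [← MvPowerSeries.coeff_zero_eq_constantCoeff, ← Matrix.map_one (MvPowerSeries.coeff 0)
    (map_zero _) (MvPowerSeries.coeff_zero_one), ← Matrix.map_sub _ (map_sub _)]

theorem snd_lt_of_mem_antidiagonal_erase [DecidableEq σ] {d : σ →₀ ℕ}
    {p : (σ →₀ ℕ) × (σ →₀ ℕ)} (hp : p ∈ (Finset.HasAntidiagonal.antidiagonal d).erase (0, d)) :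
    p.2 < d := by
  obtain ⟨hne, hpd⟩ := Finset.mem_erase.mp hp
  rw [Finset.HasAntidiagonal.mem_antidiagonal] at hpd
  refine lt_of_le_of_ne (hpd ▸ le_add_self) fun h => hne (Prod.ext ?_ h)
  rw [h] at hpd
  exact add_eq_right.mp hpd

/-- Since `P ≡ 1` at `q = 0`, comparing coefficients of `q^d` in `P X` expresses `X_d` through
`(P X)_d` and the `X_e` with `e < d`. -/
theorem CoeffsIn.of_mul_left [Fintype n] [DecidableEq n] [Ring A] {U : AddSubgroup A}
    {V : Set A} (hVU : ∀ x ∈ V, ∀ y ∈ U, x * y ∈ U) {P X : Matrix n n (MvPowerSeries σ A)}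
    (hP0 : P.map MvPowerSeries.constantCoeff = 1) (hP : CoeffsIn V P)
    (hPX : CoeffsIn U (P * X)) : CoeffsIn U X := by
  classical
  intro i j d
  induction d using WellFoundedLT.induction generalizing i j with
  | ind d ih =>
  have hsplit : MvPowerSeries.coeff d ((P * X) i j) = MvPowerSeries.coeff d (X i j) +
      ∑ l, ∑ p ∈ (Finset.HasAntidiagonal.antidiagonal d).erase (0, d),
        MvPowerSeries.coeff p.1 (P i l) * MvPowerSeries.coeff p.2 (X l j) := by
    have hlead : ∑ l, MvPowerSeries.coeff 0 (P i l) * MvPowerSeries.coeff d (X l j) =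
        MvPowerSeries.coeff d (X i j) := by
      have hP0' : ∀ l, MvPowerSeries.coeff 0 (P i l) = (1 : Matrix n n A) i l := fun l => by
        rw [MvPowerSeries.coeff_zero_eq_constantCoeff_apply, ← hP0, Matrix.map_apply]
      simp [hP0', Matrix.one_apply]
    rw [Matrix.mul_apply, map_sum, ← hlead, ← Finset.sum_add_distrib]
    refine Finset.sum_congr rfl fun l _ => ?_
    rw [MvPowerSeries.coeff_mul, ← Finset.add_sum_erase _ _
      (show ((0 : σ →₀ ℕ), d) ∈ Finset.HasAntidiagonal.antidiagonal d by simp)]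
  have hrest := U.sum_mem (t := Finset.univ) fun l _ => U.sum_mem fun p hp =>
    hVU _ (hP i l p.1) _ (ih p.2 (snd_lt_of_mem_antidiagonal_erase hp) l j)
  simpa [hsplit] using U.sub_mem (hPX i j d) hrest

theorem CoeffsIn.of_mul_right [Fintype n] [DecidableEq n] [CommRing A] {U : AddSubgroup A}
    {V : Set A} (hUV : ∀ x ∈ U, ∀ y ∈ V, x * y ∈ U) {P X : Matrix n n (MvPowerSeries σ A)}
    (hP0 : P.map MvPowerSeries.constantCoeff = 1) (hP : CoeffsIn V P)
    (hXP : CoeffsIn U (X * P)) : CoeffsIn U X := by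
  rw [← coeffsIn_transpose_iff] at hP hXP ⊢
  rw [Matrix.transpose_mul] at hXP
  refine CoeffsIn.of_mul_left (fun x hx y hy => mul_comm y x ▸ hUV y hy x hx) ?_ hP hXP
  rw [Matrix.transpose_map, hP0, Matrix.transpose_one]

end CoeffsIn

theorem MatPolyH.coeffsIn {r n : ℕ} {M : Matrix (Fin n) (Fin n) (AA r)} (h : MatPolyH M) :
    CoeffsIn (supportedIn (Set.Iic 0) : AddSubgroup LS) M :=
  fun i j d => isPolyH_iff_mem_supportedIn.mp (h i j d)

theorem MatRegH.coeffsIn {r n : ℕ} {M : Matrix (Fin n) (Fin n) (AA r)} (h : MatRegH M) :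
    CoeffsIn (supportedIn (Set.Ici 0) : AddSubgroup LS) M :=
  fun i j d => isRegH_iff_mem_supportedIn.mp (h i j d)

theorem Matrix.isUnit_det_of_map_constantCoeff_eq_one {σ A n : Type*} [Fintype n]
    [DecidableEq n] [CommRing A] {M : Matrix n n (MvPowerSeries σ A)}
    (hM : M.map MvPowerSeries.constantCoeff = 1) : IsUnit M.det := by
  rw [MvPowerSeries.isUnit_iff_constantCoeff, RingHom.map_det, RingHom.mapMatrix_apply, hM,
    Matrix.det_one]
  exact isUnit_one

section Euler

theorem coeff_scaleL (f : ℤ → ℂ) (x : LS) (k : ℤ) : (scaleL f x).coeff k = f k * x.coeff k :=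
  rfl

theorem scaleL_support_subset (f : ℤ → ℂ) (x : LS) : (scaleL f x).support ⊆ x.support :=
  fun k hk h => hk (by rw [coeff_scaleL, h, mul_zero])

theorem coeff_scaleL_mul_add_mul_scaleL (f g : ℤ → ℂ) (u v : LS) {k : ℤ} {c : ℂ}
    (hfg : ∀ i j, i + j = k → f i + g j = c) :
    (scaleL f u * v).coeff k + (u * scaleL g v).coeff k = c * (u * v).coeff k := by
  rw [HahnSeries.coeff_mul_left' u.isPWO_support (scaleL_support_subset f u),
    HahnSeries.coeff_mul_right' v.isPWO_support (scaleL_support_subset g v),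
    HahnSeries.coeff_mul, ← Finset.sum_add_distrib, Finset.mul_sum]
  refine Finset.sum_congr rfl fun ij hij => ?_
  rw [Finset.mem_antidiagonal] at hij
  rw [coeff_scaleL, coeff_scaleL, ← hfg ij.1 ij.2 hij.2.2]
  ring

variable {r n : ℕ}

theorem coeff_eulerA_coeff (w : Fin r → ℤ) (x : AA r) (d : Fin r →₀ ℕ) (k : ℤ) :
    (MvPowerSeries.coeff d (eulerA w x)).coeff k =
      (((∑ b, w b * (d b : ℤ)) - 2 * k : ℤ) : ℂ) * (MvPowerSeries.coeff d x).coeff k :=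
  rfl

theorem eulerA_add (w : Fin r → ℤ) (x y : AA r) :
    eulerA w (x + y) = eulerA w x + eulerA w y := by
  ext d k
  simp only [map_add, HahnSeries.coeff_add, coeff_eulerA_coeff, mul_add]

def eulerAddHom (w : Fin r → ℤ) : AA r →+ AA r :=
  AddMonoidHom.mk' (eulerA w) (eulerA_add w)

theorem eulerA_mul (w : Fin r → ℤ) (x y : AA r) :
    eulerA w (x * y) = eulerA w x * y + x * eulerA w y := by
  classical
  ext d k
  rw [map_add, HahnSeries.coeff_add, coeff_eulerA_coeff, MvPowerSeries.coeff_mul,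
    MvPowerSeries.coeff_mul, MvPowerSeries.coeff_mul, HahnSeries.coeff_sum, HahnSeries.coeff_sum,
    HahnSeries.coeff_sum, ← Finset.sum_add_distrib, Finset.mul_sum]
  refine Finset.sum_congr rfl fun p hp => (coeff_scaleL_mul_add_mul_scaleL _ _ _ _ ?_).symm
  rw [Finset.HasAntidiagonal.mem_antidiagonal] at hp
  intro i j hij
  subst hp hij
  push_cast [Finsupp.add_apply, mul_add, Finset.sum_add_distrib]
  ring

theorem eulerMat_sub (w : Fin r → ℤ) (P Q : Matrix (Fin n) (Fin n) (AA r)) :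
    eulerMat w (P - Q) = eulerMat w P - eulerMat w Q := by
  ext i j : 1
  exact (eulerAddHom w).map_sub (P i j) (Q i j)

theorem eulerA_one (w : Fin r → ℤ) : eulerA w 1 = 0 := by
  ext d k
  rw [coeff_eulerA_coeff, MvPowerSeries.coeff_one]
  split_ifs with hd
  · subst hd
    rcases eq_or_ne k 0 with rfl | hk
    · simp
    · simp [HahnSeries.coeff_one, hk]
  · simp

theorem eulerMat_one (w : Fin r → ℤ) : eulerMat w (1 : Matrix (Fin n) (Fin n) (AA r)) = 0 := by
  ext i j : 1
  change eulerA w ((1 : Matrix (Fin n) (Fin n) (AA r)) i j) = 0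
  rw [Matrix.one_apply]
  split_ifs
  exacts [eulerA_one w, (eulerAddHom w).map_zero]

theorem eulerMat_mul (w : Fin r → ℤ) (P Q : Matrix (Fin n) (Fin n) (AA r)) :
    eulerMat w (P * Q) = eulerMat w P * Q + P * eulerMat w Q := by
  ext i j : 1
  change eulerAddHom w (∑ l, P i l * Q l j) = _
  simp only [map_sum, Matrix.add_apply, Matrix.mul_apply, ← Finset.sum_add_distrib]
  exact Finset.sum_congr rfl fun l _ => eulerA_mul w (P i l) (Q l j)

end Euler

section GradingOperator

variable {r n : ℕ}

def gradingOp (w : Fin r → ℤ) (μ : Matrix (Fin n) (Fin n) ℂ)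
    (M : Matrix (Fin n) (Fin n) (AA r)) : Matrix (Fin n) (Fin n) (AA r) :=
  eulerMat w M + μ.map (cA r) * M - M * μ.map (cA r)

variable (w : Fin r → ℤ) (μ : Matrix (Fin n) (Fin n) ℂ)

theorem gradingOp_mul (P Q : Matrix (Fin n) (Fin n) (AA r)) :
    gradingOp w μ (P * Q) = gradingOp w μ P * Q + P * gradingOp w μ Q := by
  simp only [gradingOp, eulerMat_mul, Matrix.add_mul, Matrix.sub_mul, Matrix.mul_add,
    Matrix.mul_sub, Matrix.mul_assoc]
  abel

theorem gradingOp_sub (P Q : Matrix (Fin n) (Fin n) (AA r)) :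
    gradingOp w μ (P - Q) = gradingOp w μ P - gradingOp w μ Q := by
  simp only [gradingOp, eulerMat_sub, Matrix.mul_sub, Matrix.sub_mul]
  abel

theorem gradingOp_one : gradingOp w μ 1 = 0 := by
  simp [gradingOp, eulerMat_one]

theorem coeffsIn_map_cA : CoeffsIn (supportedIn {0} : AddSubgroup LS) (μ.map (cA r)) := by
  intro i j d
  rw [Matrix.map_apply, cA, RingHom.comp_apply, MvPowerSeries.coeff_C]
  split_ifs
  · rw [HahnSeries.C_apply]
    exact HahnSeries.support_single_subset
  · exact zero_mem _

theorem gradingOp_sub_one (M : Matrix (Fin n) (Fin n) (AA r)) :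
    gradingOp w μ (M - 1) = gradingOp w μ M := by
  rw [gradingOp_sub, gradingOp_one, sub_zero]

variable {w μ}

theorem CoeffsIn.eulerMat {s : Set ℤ} {M : Matrix (Fin n) (Fin n) (AA r)}
    (hM : CoeffsIn (supportedIn s : AddSubgroup LS) M) :
    CoeffsIn (supportedIn s : AddSubgroup LS) (eulerMat w M) :=
  fun i j d => (scaleL_support_subset _ _).trans (hM i j d)

theorem CoeffsIn.gradingOp {s : Set ℤ} {M : Matrix (Fin n) (Fin n) (AA r)}
    (hM : CoeffsIn (supportedIn s : AddSubgroup LS) M) :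
    CoeffsIn (supportedIn s : AddSubgroup LS) (gradingOp w μ M) := by
  have hs : ({0} : Set ℤ) + s ⊆ s := by simp
  have hs' : s + ({0} : Set ℤ) ⊆ s := by simp
  refine (hM.eulerMat.add ?_).sub ?_
  · exact CoeffsIn.mul (fun x hx y hy => mul_mem_supportedIn hs hx hy) (coeffsIn_map_cA μ) hM
  · exact CoeffsIn.mul (fun x hx y hy => mul_mem_supportedIn hs' hx hy) hM (coeffsIn_map_cA μ)

end GradingOperator

section BirkhoffAtZero

variable {n : Type*} [Fintype n]

theorem Matrix.mul_apply_mem_supportedIn {s t u : Set ℤ} (hstu : s + t ⊆ u)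
    {P Q : Matrix n n LS} (hP : ∀ i j, P i j ∈ supportedIn s)
    (hQ : ∀ i j, Q i j ∈ supportedIn t) (i j : n) : (P * Q) i j ∈ supportedIn u := by
  rw [Matrix.mul_apply]
  exact sum_mem fun l _ => mul_mem_supportedIn hstu (hP i l) (hQ l j)

theorem Matrix.exists_forall_mem_supportedIn_Ici (A : Matrix n n LS) :
    ∃ m : ℤ, ∀ i j, A i j ∈ supportedIn (Set.Ici m) := by
  obtain ⟨m, hm⟩ := (Set.finite_range fun p : n × n => (A p.1 p.2).order).bddBelow
  exact ⟨m, fun i j k hk => (hm ⟨(i, j), rfl⟩).trans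
    (HahnSeries.order_le_of_coeff_ne_zero ((HahnSeries.mem_support _ k).mp hk))⟩

/-- Iterating `A = 1 - A (B - 1)` raises the lowest power of `t = ħ⁻¹` occurring in `A`
until it reaches `0`. -/
theorem mem_supportedIn_Ici_zero_of_mul_eq_one [DecidableEq n] {A B : Matrix n n LS}
    (hAB : A * B = 1) (hB : ∀ i j, (B - 1) i j ∈ supportedIn (Set.Ioi 0)) (i j : n) :
    A i j ∈ supportedIn (Set.Ici 0) := by
  have hA : A = 1 - A * (B - 1) := by rw [Matrix.mul_sub, hAB, Matrix.mul_one, sub_sub_cancel]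
  obtain ⟨m, hm⟩ := A.exists_forall_mem_supportedIn_Ici
  have hstep : ∀ k : ℕ, ∀ i j, A i j ∈ supportedIn (Set.Ici (min 0 (m + k))) := by
    intro k
    induction k with
    | zero => exact fun i j => (hm i j).trans (Set.Ici_subset_Ici.mpr (by omega))
    | succ k ih =>
      intro i j
      rw [hA, Matrix.sub_apply]
      refine sub_mem (Matrix.one_apply_mem_supportedIn (by simp) i j)
        (Matrix.mul_apply_mem_supportedIn ?_ ih hB i j)
      refine (Set.Ici_add_Ioi_subset _ _).trans fun x hx => ?_
      simp only [Set.mem_Ioi, Set.mem_Ici] at hx ⊢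
      omega
  have := hstep (-m).toNat i j
  rwa [show min 0 (m + ((-m).toNat : ℤ)) = 0 by omega] at this

theorem eq_one_of_mul_eq_one [DecidableEq n] {A B : Matrix n n LS} (hAB : A * B = 1)
    (hA : ∀ i j, A i j ∈ supportedIn (Set.Iic 0))
    (hB : ∀ i j, (B - 1) i j ∈ supportedIn (Set.Ioi 0)) : A = 1 := by
  rw [← sub_eq_zero]
  ext i j : 1
  have hpos : (A - 1) i j ∈ supportedIn (Set.Ioi 0) := by
    rw [show A - 1 = -(A * (B - 1)) by rw [Matrix.mul_sub, hAB, Matrix.mul_one, neg_sub],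
      Matrix.neg_apply]
    refine neg_mem (Matrix.mul_apply_mem_supportedIn ?_
      (mem_supportedIn_Ici_zero_of_mul_eq_one hAB hB) hB i j)
    simpa using Set.Ici_add_Ioi_subset (0 : ℤ) 0
  have hneg : (A - 1) i j ∈ supportedIn (Set.Iic 0) :=
    sub_mem (hA i j) (Matrix.one_apply_mem_supportedIn (by simp) i j)
  exact HahnSeries.eq_zero_of_mem_supportedIn_of_disjoint (Set.Iic_disjoint_Ioi le_rfl) hneg hpos

end BirkhoffAtZero

theorem eq_zero_of_coeffsIn_mul {σ n : Type*} [Fintype n] [DecidableEq n]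
    {P Q X : Matrix n n (MvPowerSeries σ LS)}
    (hP0 : P.map MvPowerSeries.constantCoeff = 1) (hQ0 : Q.map MvPowerSeries.constantCoeff = 1)
    (hP : CoeffsIn (supportedIn (Set.Iic 0) : AddSubgroup LS) P)
    (hQ : CoeffsIn (supportedIn (Set.Ici 0) : AddSubgroup LS) Q)
    (hPX : CoeffsIn (supportedIn (Set.Iic 0) : AddSubgroup LS) (P * X))
    (hXQ : CoeffsIn (supportedIn (Set.Ioi 0) : AddSubgroup LS) (X * Q)) : X = 0 := by
  have hIic : Set.Iic (0 : ℤ) + Set.Iic 0 ⊆ Set.Iic 0 := by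
    simpa using Set.Iic_add_Iic_subset (0 : ℤ) 0
  have hIoi : Set.Ioi (0 : ℤ) + Set.Ici 0 ⊆ Set.Ioi 0 := by
    simpa using Set.Ioi_add_Ici_subset (0 : ℤ) 0
  have hX_poly := CoeffsIn.of_mul_left (fun _ hx _ hy => mul_mem_supportedIn hIic hx hy) hP0 hP hPX
  have hX_pos := CoeffsIn.of_mul_right (fun _ hx _ hy => mul_mem_supportedIn hIoi hx hy) hQ0 hQ hXQ
  ext i j d : 2
  exact HahnSeries.eq_zero_of_mem_supportedIn_of_disjoint (Set.Iic_disjoint_Ioi le_rfl)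
    (hX_poly i j d) (hX_pos i j d)

section Factorization

variable {r n : ℕ} {w : Fin r → ℤ} {μ : Matrix (Fin n) (Fin n) ℂ}

theorem exists_mul_eq_gradingOp_of_gradingOp_mul_eq_zero {P Q : Matrix (Fin n) (Fin n) (AA r)}
    (hP : IsUnit P.det) (hPQ : gradingOp w μ (P * Q) = 0) :
    ∃ X, P * X = gradingOp w μ P ∧ X * Q = -gradingOp w μ Q := by
  refine ⟨P⁻¹ * gradingOp w μ P, Matrix.mul_nonsing_inv_cancel_left _ _ hP, ?_⟩
  rw [gradingOp_mul, add_eq_zero_iff_eq_neg] at hPQ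
  rw [Matrix.mul_assoc, hPQ, Matrix.mul_neg, Matrix.nonsing_inv_mul_cancel_left _ _ hP]

theorem coeffsIn_sub_one_of_isBirkhoffFactorization {S Sp Sm : Matrix (Fin n) (Fin n) (AA r)}
    (h : IsBirkhoffFactorization S Sp Sm) :
    CoeffsIn (supportedIn (Set.Ioi 0) : AddSubgroup LS) (Sm - 1) := by
  obtain ⟨-, hSm, hnorm, -⟩ := h
  intro i j d
  have hone : (1 : Matrix (Fin n) (Fin n) (AA r)) i j = MvPowerSeries.map HahnSeries.C
      ((1 : Matrix (Fin n) (Fin n) (MvPowerSeries (Fin r) ℂ)) i j) := by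
    rw [Matrix.one_apply, Matrix.one_apply]
    split_ifs <;> simp
  rw [Matrix.sub_apply, map_sub, hone, MvPowerSeries.coeff_map, ← hnorm]
  exact sub_C_coeff_zero_mem_supportedIn_Ioi (isRegH_iff_mem_supportedIn.mp (hSm i j d))

end Factorization

theorem birkhoff_factors_graded_general {r n : ℕ}
    (S Sp Sm : Matrix (Fin n) (Fin n) (AA r))
    (hScc : S.map ccA = 1)
    (hfact : IsBirkhoffFactorization S Sp Sm)
    (μ : Matrix (Fin n) (Fin n) ℂ) (w : Fin r → ℤ)
    (hgrade : eulerMat w S + μ.map (cA r) * S - S * μ.map (cA r) = 0) :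
    eulerMat w Sp + μ.map (cA r) * Sp - Sp * μ.map (cA r) = 0 ∧
    eulerMat w Sm + μ.map (cA r) * Sm - Sm * μ.map (cA r) = 0 := by
  have hSm_sub := coeffsIn_sub_one_of_isBirkhoffFactorization hfact
  obtain ⟨hSp, hSm, -, rfl⟩ := hfact
  have hSp0 : Sp.map MvPowerSeries.constantCoeff = 1 :=
    eq_one_of_mul_eq_one (by rw [← Matrix.map_mul]; exact hScc) (fun i j => hSp.coeffsIn i j 0)
      hSm_sub.map_constantCoeff_sub_one_apply
  have hSm0 : Sm.map MvPowerSeries.constantCoeff = 1 := by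
    rwa [ccA, Matrix.map_mul, hSp0, Matrix.one_mul] at hScc
  obtain ⟨X, hSpX, hXSm⟩ := exists_mul_eq_gradingOp_of_gradingOp_mul_eq_zero
    (Matrix.isUnit_det_of_map_constantCoeff_eq_one hSp0) hgrade
  have hX : X = 0 := by
    refine eq_zero_of_coeffsIn_mul hSp0 hSm0 hSp.coeffsIn hSm.coeffsIn ?_ ?_
    · rw [hSpX]
      exact hSp.coeffsIn.gradingOp
    · rw [hXSm, ← gradingOp_sub_one]
      exact hSm_sub.gradingOp.neg
  change gradingOp w μ Sp = 0 ∧ gradingOp w μ Sm = 0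
  exact ⟨by rw [← hSpX, hX, Matrix.mul_zero], by rw [← neg_eq_zero, ← hXSm, hX, Matrix.zero_mul]⟩

/-- **The Birkhoff factors of a degree-preserving matrix are degree-preserving**
(key step of the graded canonical frame Theorem).  If `S|_{q=0} = Id`,
`S = S₊·S₋` is the Birkhoff factorization, and `E(S) + [μ, S] = 0` for the
Euler operator `E = 2ħ∂/∂ħ + Σ_b w_b θ_b` and `μ ∈ Mat_n(ℂ)`, then also
`E(S₊) + [μ, S₊] = 0` and `E(S₋) + [μ, S₋] = 0`. -/
theorem birkhoff_factors_graded {r n : ℕ} (hr : 1 ≤ r) (hn : 1 ≤ n)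
    (S Sp Sm : Matrix (Fin n) (Fin n) (AA r))
    (hScc : S.map ccA = 1)
    (hfact : IsBirkhoffFactorization S Sp Sm)
    (μ : Matrix (Fin n) (Fin n) ℂ) (w : Fin r → ℤ)
    (hgrade : eulerMat w S + μ.map (cA r) * S - S * μ.map (cA r) = 0) :
    eulerMat w Sp + μ.map (cA r) * Sp - Sp * μ.map (cA r) = 0 ∧
    eulerMat w Sm + μ.map (cA r) * Sm - Sm * μ.map (cA r) = 0 :=
  birkhoff_factors_graded_general S Sp Sm hScc hfact μ w hgrade
end
end

section
/- Let Ω_1,…,Ω_r ∈ Mat_n(ℂ[ħ][[q]]) with constant terms P_a := Ω_a|_{q=0} ∈ Mat_n(ℂ) independent of ħ, and define the operators ∇_a := ħθ_a + Ω_a on the module (ℂ[ħ][[q]])^n. Let e_0 ∈ ℂ^n be such that ℂ^n is spanned over ℂ by the vectors P_{a_1}P_{a_2}⋯P_{a_k}·e_0 over all k ≥ 0 and a_1,…,a_k ∈ {1,…,r}. Then the ℂ[ħ][[q]]-submodule of (ℂ[ħ][[q]])^n generated by the vectors ∇_{a_1}∇_{a_2}⋯∇_{a_k}·e_0 (k ≥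 0, a_i ∈ {1,…,r}) is the whole module (ℂ[ħ][[q]])^n. -/
/-!
Work over ℂ.  `RR r = ℂ[ħ][[q¹,…,qʳ]]` is the ring of formal power series in
`q` with coefficients polynomials in `ħ`, and `θ_a = qᵃ·∂/∂qᵃ` the logarithmic
partial derivative.
-/

noncomputable section

/-- `ℂ[ħ][[q¹,…,qʳ]]`. -/
abbrev RR (r : ℕ) := MvPowerSeries (Fin r) (Polynomial ℂ)

/-- The logarithmic derivative `θ_a = qᵃ ∂/∂qᵃ` on `ℂ[ħ][[q]]`. -/
def thetaP {r : ℕ} (a : Fin r) (x : RR r) : RR r :=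
  fun d => ((d a : ℕ) : Polynomial ℂ) * x d

/-- `ħ` as an element of `ℂ[ħ][[q]]`. -/
def hbarP (r : ℕ) : RR r := MvPowerSeries.C (σ := Fin r) (R := Polynomial ℂ) Polynomial.X

/-- The embedding `ℂ → ℂ[ħ][[q]]`. -/
def cP (r : ℕ) : ℂ →+* RR r :=
  (MvPowerSeries.C (σ := Fin r) (R := Polynomial ℂ)).comp (Polynomial.C : ℂ →+* Polynomial ℂ)

/-- The operator `∇_a = ħθ_a + Ω_a` acting on `(ℂ[ħ][[q]])ⁿ`. -/
def nabla {r n : ℕ} (Ω : Fin r → Matrix (Fin n) (Fin n) (RR r)) (a : Fin r)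
    (v : Fin n → RR r) : Fin n → RR r :=
  fun i => hbarP r * thetaP a (v i) + ((Ω a).mulVec v) i

/-!
Taking constant terms sends the `∇`-word of `l` applied to `e₀` to the `P`-word of `l` applied
to `e₀`, because `θ_a` kills constant terms. Choose `n` words whose `P`-images span `ℂⁿ`. The
matrix whose columns are the corresponding `∇`-words then has a determinant whose constant term
is the nonzero complex determinant of the `P`-images, so it is a unit of `ℂ[ħ][[q]]` and its
columns span `(ℂ[ħ][[q]])ⁿ`.
-/

open Submodule Set

theorem exists_fun_fin_mem_span_eq_top {K V : Type*} [Field K] [AddCommGroup V] [Module K V]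
    [FiniteDimensional K V] {n : ℕ} (hn : Module.finrank K V = n) {s : Set V}
    (hs : span K s = ⊤) : ∃ w : Fin n → V, (∀ j, w j ∈ s) ∧ span K (range w) = ⊤ := by
  subst hn
  have := exists_fun_fin_finrank_span_eq K s
  rw [hs, finrank_top] at this
  obtain ⟨w, hws, hw, -⟩ := this
  exact ⟨w, hws, hw⟩

namespace Matrix

variable {m R S : Type*} [Fintype m] [DecidableEq m] [CommRing R] [CommRing S]

theorem span_col_eq_top_iff_isUnit_det (A : Matrix m m R) :
    span R (range A.col) = ⊤ ↔ IsUnit A.det := by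
  rw [← range_mulVecLin, LinearMap.range_eq_top, ← isUnit_iff_isUnit_det,
    ← mulVec_surjective_iff_isUnit]
  rfl

theorem span_col_map_eq_top (f : R →+* S) {A : Matrix m m R} (hA : span R (range A.col) = ⊤) :
    span S (range (A.map f).col) = ⊤ := by
  rw [span_col_eq_top_iff_isUnit_det] at hA ⊢
  exact f.map_det A ▸ hA.map f

theorem span_col_eq_top_of_map_constantCoeff {σ : Type*} {A : Matrix m m (MvPowerSeries σ R)}
    (hA : span R (range (A.map MvPowerSeries.constantCoeff).col) = ⊤) :
    span (MvPowerSeries σ R) (range A.col) = ⊤ := by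
  rw [span_col_eq_top_iff_isUnit_det] at hA ⊢
  rwa [MvPowerSeries.isUnit_iff_constantCoeff, RingHom.map_det]

end Matrix

theorem constantCoeff_thetaP {r : ℕ} (a : Fin r) (x : RR r) :
    MvPowerSeries.constantCoeff (thetaP a x) = 0 := by
  show thetaP a x 0 = 0
  simp [thetaP]

theorem constantCoeff_foldr_nabla {r n : ℕ} {Ω : Fin r → Matrix (Fin n) (Fin n) (RR r)}
    {P : Fin r → Matrix (Fin n) (Fin n) ℂ}
    (hP : ∀ a i j, MvPowerSeries.constantCoeff (Ω a i j) = Polynomial.C (P a i j))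
    (e0 : Fin n → ℂ) (l : List (Fin r)) (i : Fin n) :
    MvPowerSeries.constantCoeff (l.foldr (nabla Ω) (fun i => cP r (e0 i)) i) =
      Polynomial.C ((l.map P).prod.mulVec e0 i) := by
  induction l generalizing i with
  | nil => simp [cP]
  | cons a l ih =>
    rw [List.foldr_cons, List.map_cons, List.prod_cons, ← Matrix.mulVec_mulVec]
    simp only [nabla, map_add, map_mul, constantCoeff_thetaP, mul_zero, zero_add, Matrix.mulVec,
      dotProduct, map_sum, hP, ih]

theorem nabla_words_generate_general {r n : ℕ}
    (Ω : Fin r → Matrix (Fin n) (Fin n) (RR r))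
    (P : Fin r → Matrix (Fin n) (Fin n) ℂ)
    (hP : ∀ a i j, MvPowerSeries.constantCoeff (σ := Fin r) (R := Polynomial ℂ) (Ω a i j) =
      Polynomial.C (P a i j))
    (e0 : Fin n → ℂ)
    (hspan : Submodule.span ℂ
      {v : Fin n → ℂ | ∃ l : List (Fin r), v = ((l.map P).prod).mulVec e0} = ⊤) :
    Submodule.span (RR r)
      {v : Fin n → RR r | ∃ l : List (Fin r),
        v = l.foldr (nabla Ω) (fun i => cP r (e0 i))} = ⊤ := by
  obtain ⟨w, hwS, hw⟩ := exists_fun_fin_mem_span_eq_top (Module.finrank_fin_fun ℂ) hspan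
  choose L hL using hwS
  let A : Matrix (Fin n) (Fin n) (RR r) :=
    Matrix.of fun i j => (L j).foldr (nabla Ω) (fun i => cP r (e0 i)) i
  have hA : A.map MvPowerSeries.constantCoeff = (Matrix.of fun i j => w j i).map Polynomial.C := by
    ext i j
    simp [A, constantCoeff_foldr_nabla hP, hL]
  have hAspan : span (RR r) (range A.col) = ⊤ :=
    Matrix.span_col_eq_top_of_map_constantCoeff (hA ▸ Matrix.span_col_map_eq_top Polynomial.C hw)
  refine eq_top_mono (span_mono ?_) hAspan
  rintro _ ⟨j, rfl⟩
  exact ⟨L j, rfl⟩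

/-- **Generation of the quantum `D`-module by the `J`-function** (the
generation statement underlying Theorems 2.6 and 3.12: `D/I ≅ E`).  Let
`Ω_a ∈ Mat_n(ℂ[ħ][[q]])` have `ħ`-independent constant terms
`P_a = Ω_a|_{q=0} ∈ Mat_n(ℂ)`, and set `∇_a = ħθ_a + Ω_a`.  If `ℂⁿ` is spanned
by the vectors `P_{a_1}⋯P_{a_k}e₀`, then the `ℂ[ħ][[q]]`-submodule of
`(ℂ[ħ][[q]])ⁿ` generated by the vectors `∇_{a_1}⋯∇_{a_k}e₀` is everything. -/
theorem nabla_words_generate {r n : ℕ} (hr : 1 ≤ r) (hn : 1 ≤ n)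
    (Ω : Fin r → Matrix (Fin n) (Fin n) (RR r))
    (P : Fin r → Matrix (Fin n) (Fin n) ℂ)
    (hP : ∀ a i j, MvPowerSeries.constantCoeff (σ := Fin r) (R := Polynomial ℂ) (Ω a i j) =
      Polynomial.C (P a i j))
    (e0 : Fin n → ℂ)
    (hspan : Submodule.span ℂ
      {v : Fin n → ℂ | ∃ l : List (Fin r), v = ((l.map P).prod).mulVec e0} = ⊤) :
    Submodule.span (RR r)
      {v : Fin n → RR r | ∃ l : List (Fin r),
        v = l.foldr (nabla Ω) (fun i => cP r (e0 i))} = ⊤ :=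
  nabla_words_generate_general Ω P hP e0 hspan
end
end
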